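/- arXiv:1006.5162 — 3 statements merged into one kernel-verified Lean document; each statement's English description precedes it below -/
import Mathlib

section
/- Let q > 1 be a real number, let k ≥ 2 be an integer, and let α, α₁, …, α_k be real numbers with 0 < α, α_i < 1 for every i ∈ {1,…,k}, and α + (k−1) = α₁ + ⋯ + α_k. Then 1/(q^α − 1) + (k−1)/(q − 1) > 1/(q^(α₁) − 1) + ⋯ + 1/(q^(α_k) − 1). -/
/-!
The function `f x = 1 / (q ^ x - 1)` is strictly convex on `(0, ∞)`. The constraint on the sum
forces `α < αᵢ < 1` for every `i`, and writing each `αᵢ` as a convex combination of `α` and `1`,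
the weights of `α` add up to `1` and those of `1` to `k - 1`. Summing the strict secant
inequalities `f αᵢ < ((1 - αᵢ) f α + (αᵢ - α) f 1) / (1 - α)` gives the claim.
-/

open Real Set Finset

theorem Finset.sum_lt_add_card_sub_one_mul {ι : Type*} [DecidableEq ι] {t : Finset ι} {a : ι → ℝ} {c : ℝ} {i : ι}
    (hi : i ∈ t) (ht : 1 < #t) (ha : ∀ j ∈ t, a j < c) :
    ∑ j ∈ t, a j < a i + (#t - 1 : ℝ) * c := by
  have hne : (t.erase i).Nonempty := by
    rw [← card_pos, card_erase_of_mem hi]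
    omega
  have hrest : ∑ j ∈ t.erase i, a j < ∑ _j ∈ t.erase i, c :=
    sum_lt_sum_of_nonempty hne fun j hj => ha j (mem_of_mem_erase hj)
  rw [sum_const, card_erase_of_mem hi, nsmul_eq_mul, Nat.cast_sub ht.le, Nat.cast_one] at hrest
  rw [← add_sum_erase t a hi]
  linarith

section Secant

variable {𝕜 ι : Type*} [Field 𝕜] [LinearOrder 𝕜] [IsStrictOrderedRing 𝕜] {s : Set 𝕜}
  {f : 𝕜 → 𝕜} {x y : 𝕜} {t : Finset ι} {a : ι → 𝕜}

theorem StrictConvexOn.mul_sum_lt_secant (hf : StrictConvexOn 𝕜 s f) (hx : x ∈ s) (hy : y ∈ s)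
    (ht : t.Nonempty) (ha : ∀ i ∈ t, a i ∈ Ioo x y) :
    (y - x) * ∑ i ∈ t, f (a i) < (∑ i ∈ t, (y - a i)) * f x + (∑ i ∈ t, (a i - x)) * f y := by
  rw [mul_sum, sum_mul, sum_mul, ← sum_add_distrib]
  exact sum_lt_sum_of_nonempty ht fun i hi =>
    hf.secant_strict_mono_aux1 hx hy (ha i hi).1 (ha i hi).2

end Secant

theorem strictAntiOn_div_sub_one_sq : StrictAntiOn (fun u : ℝ => u / (u - 1) ^ 2) (Ioi 1) := by
  intro u hu v hv huv
  simp only [Set.mem_Ioi] at hu hv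
  rw [div_lt_div_iff₀ (by nlinarith) (by nlinarith)]
  nlinarith [mul_pos (sub_pos.2 huv) (show 0 < u * v - 1 by nlinarith)]

theorem hasDerivAt_inv_rpow_sub_one {q x : ℝ} (hq : 1 < q) (hx : 0 < x) :
    HasDerivAt (fun x => (q ^ x - 1)⁻¹) (-log q * (q ^ x / (q ^ x - 1) ^ 2)) x := by
  have hpow := (hasStrictDerivAt_const_rpow (zero_lt_one.trans hq) x).hasDerivAt
  refine ((hpow.sub_const 1).inv (sub_ne_zero.2 (one_lt_rpow hq hx).ne')).congr_deriv ?_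
  ring

theorem strictConvexOn_inv_rpow_sub_one {q : ℝ} (hq : 1 < q) :
    StrictConvexOn ℝ (Ioi (0 : ℝ)) (fun x => (q ^ x - 1)⁻¹) := by
  refine StrictMonoOn.strictConvexOn_of_deriv (convex_Ioi (0 : ℝ))
    (fun x hx => (hasDerivAt_inv_rpow_sub_one hq hx).continuousAt.continuousWithinAt) ?_
  rw [interior_Ioi]
  intro x hx y hy hxy
  rw [(hasDerivAt_inv_rpow_sub_one hq hx).deriv, (hasDerivAt_inv_rpow_sub_one hq hy).deriv]
  exact mul_lt_mul_of_neg_left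
    (strictAntiOn_div_sub_one_sq (one_lt_rpow hq hx) (one_lt_rpow hq hy)
      (rpow_lt_rpow_of_exponent_lt hq hxy))
    (neg_neg_of_pos (log_pos hq))

theorem statement6_general (q : ℝ) (hq : 1 < q) (k : ℕ) (hk : 2 ≤ k)
    (α : ℝ) (a : Fin k → ℝ)
    (hα : 0 < α) (ha1 : ∀ i, a i < 1)
    (hsum : α + ((k : ℝ) - 1) = ∑ i, a i) :
    (∑ i, 1 / (q ^ (a i) - 1)) < 1 / (q ^ α - 1) + ((k : ℝ) - 1) / (q - 1) := by
  have hcard : 1 < #(univ : Finset (Fin k)) := by simp only [card_univ, Fintype.card_fin]; omega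
  have hαa (i : Fin k) : α < a i := by
    have := sum_lt_add_card_sub_one_mul (mem_univ i) hcard fun j _ => ha1 j
    simp only [card_univ, Fintype.card_fin, mul_one] at this
    linarith
  have hα1 : α < 1 := (hαa ⟨0, by omega⟩).trans (ha1 _)
  have hsecant := (strictConvexOn_inv_rpow_sub_one hq).mul_sum_lt_secant hα (Set.mem_Ioi.2 one_pos)
    (univ_nonempty_iff.2 ⟨⟨0, by omega⟩⟩) fun i _ => ⟨hαa i, ha1 i⟩
  have hleft : ∑ i, (1 - a i) = 1 - α := by
    simp only [sum_sub_distrib, sum_const, card_univ, Fintype.card_fin, nsmul_eq_mul, mul_one]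
    linarith
  have hright : ∑ i, (a i - α) = ((k : ℝ) - 1) * (1 - α) := by
    simp only [sum_sub_distrib, sum_const, card_univ, Fintype.card_fin, nsmul_eq_mul]
    linear_combination -hsum
  rw [hleft, hright, rpow_one] at hsecant
  simp only [one_div]
  refine lt_of_mul_lt_mul_left (hsecant.trans_eq ?_) (sub_pos.2 hα1).le
  ring

theorem statement6 (q : ℝ) (hq : 1 < q) (k : ℕ) (hk : 2 ≤ k)
    (α : ℝ) (a : Fin k → ℝ)
    (hα : 0 < α) (ha0 : ∀ i, 0 < a i) (ha1 : ∀ i, a i < 1)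
    (hsum : α + ((k : ℝ) - 1) = ∑ i, a i) :
    (∑ i, 1 / (q ^ (a i) - 1)) < 1 / (q ^ α - 1) + ((k : ℝ) - 1) / (q - 1) :=
  statement6_general q hq k hk α a hα ha1 hsum
end

section
/- Let q > 1 be a real number and let α₁, α₂, α₃ be complex numbers such that q^(α_i) ≠ 1 for i = 1, 2, 3 and q^(α₁+α₂+α₃) = q. Then ((q−1)/q)·(1/(q^(α₁)−1) + 1/(q^(α₂)−1) + 1/(q^(α₃)−1)) + (q−2)/q = ∏_{i=1}^{3} (1 − q^(α_i − 1))/(1 − q^(−α_i)). -/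
/-!
STATEMENT 8 (Sally–Taibleson identity). For a real `q > 1` and complex
`α₁, α₂, α₃` with `q^(α_i) ≠ 1` for `i = 1,2,3` and `q^(α₁+α₂+α₃) = q`:
`((q-1)/q)·(1/(q^(α₁)-1) + 1/(q^(α₂)-1) + 1/(q^(α₃)-1)) + (q-2)/q
  = ∏_{i=1}^{3} (1 - q^(α_i - 1))/(1 - q^(-α_i))`.
Here `q^z` is the complex power `exp(z · log q)`.
-/

theorem statement8 (q : ℝ) (hq : 1 < q) (α₁ α₂ α₃ : ℂ)
    (h1 : (q : ℂ) ^ α₁ ≠ 1) (h2 : (q : ℂ) ^ α₂ ≠ 1) (h3 : (q : ℂ) ^ α₃ ≠ 1)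
    (hsum : (q : ℂ) ^ (α₁ + α₂ + α₃) = (q : ℂ)) :
    ((q : ℂ) - 1) / (q : ℂ) *
        (1 / ((q : ℂ) ^ α₁ - 1) + 1 / ((q : ℂ) ^ α₂ - 1) + 1 / ((q : ℂ) ^ α₃ - 1)) +
      ((q : ℂ) - 2) / (q : ℂ)
    = (1 - (q : ℂ) ^ (α₁ - 1)) / (1 - (q : ℂ) ^ (-α₁)) *
        ((1 - (q : ℂ) ^ (α₂ - 1)) / (1 - (q : ℂ) ^ (-α₂))) *
        ((1 - (q : ℂ) ^ (α₃ - 1)) / (1 - (q : ℂ) ^ (-α₃))) := by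
  have hq0 : (q : ℂ) ≠ 0 := by
    exact_mod_cast (lt_trans one_pos hq).ne'
  rw [show α₁ - 1 = α₁ + (-1) from by ring, show α₂ - 1 = α₂ + (-1) from by ring,
    show α₃ - 1 = α₃ + (-1) from by ring,
    Complex.cpow_add _ _ hq0, Complex.cpow_add _ _ hq0, Complex.cpow_add _ _ hq0]
  simp only [Complex.cpow_neg, Complex.cpow_one]
  rw [Complex.cpow_add _ _ hq0, Complex.cpow_add _ _ hq0] at hsum
  set a := (q : ℂ) ^ α₁ with ha
  set b := (q : ℂ) ^ α₂ with hb
  set c := (q : ℂ) ^ α₃ with hc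
  have ha0 : a ≠ 0 := fun h => hq0 ((Complex.cpow_eq_zero_iff _ _).mp h).1
  have hb0 : b ≠ 0 := fun h => hq0 ((Complex.cpow_eq_zero_iff _ _).mp h).1
  have hc0 : c ≠ 0 := fun h => hq0 ((Complex.cpow_eq_zero_iff _ _).mp h).1
  have ha1 : a - 1 ≠ 0 := sub_ne_zero.mpr h1
  have hb1 : b - 1 ≠ 0 := sub_ne_zero.mpr h2
  have hc1 : c - 1 ≠ 0 := sub_ne_zero.mpr h3
  have ha1' : 1 - a⁻¹ ≠ 0 := sub_ne_zero.mpr fun h => h1 (inv_eq_one.mp h.symm)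
  have hb1' : 1 - b⁻¹ ≠ 0 := sub_ne_zero.mpr fun h => h2 (inv_eq_one.mp h.symm)
  have hc1' : 1 - c⁻¹ ≠ 0 := sub_ne_zero.mpr fun h => h3 (inv_eq_one.mp h.symm)
  rw [← hsum]
  have f1 : (1 - a * (a * b * c)⁻¹) / (1 - a⁻¹) = a * (b * c - 1) / ((a - 1) * (b * c)) := by
    rw [div_eq_div_iff ha1'
      (mul_ne_zero ha1 (mul_ne_zero hb0 hc0))]
    field_simp
  have f2 : (1 - b * (a * b * c)⁻¹) / (1 - b⁻¹) = b * (a * c - 1) / ((b - 1) * (a * c)) := by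
    rw [div_eq_div_iff hb1'
      (mul_ne_zero hb1 (mul_ne_zero ha0 hc0))]
    field_simp
  have f3 : (1 - c * (a * b * c)⁻¹) / (1 - c⁻¹) = c * (a * b - 1) / ((c - 1) * (a * b)) := by
    rw [div_eq_div_iff hc1'
      (mul_ne_zero hc1 (mul_ne_zero ha0 hb0))]
    field_simp
  rw [f1, f2, f3]
  field_simp
  ring
end

section
/- Let q > 1 be a real number and let α₁, α₂, α₃ be complex numbers such that q^(α_i) ≠ 1 and Re(α_i) < 1 for i = 1, 2, 3, and q^(α₁+α₂+α₃) = q. Then ((q−1)/q)·(1/(q^(α₁)−1) + 1/(q^(α₂)−1) + 1/(q^(α₃)−1)) + (q−2)/q ≠ 0. -/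
/-!
Write `tᵢ = q^{αᵢ}`, so that `t₁ t₂ t₃ = q`. Clearing denominators, the expression times
`q² ∏ (tᵢ - 1)` equals `∏ (q - tᵢ)`, and `Re αᵢ < 1` gives `|tᵢ| = q^{Re αᵢ} < q`, so no factor
vanishes.
-/

section Residue

variable {K : Type*} [Field K]

theorem residue_mul_eq {q t₁ t₂ t₃ : K}
    (h₁ : t₁ ≠ 1) (h₂ : t₂ ≠ 1) (h₃ : t₃ ≠ 1) (hprod : t₁ * t₂ * t₃ = q) :
    ((q - 1) / q * (1 / (t₁ - 1) + 1 / (t₂ - 1) + 1 / (t₃ - 1)) + (q - 2) / q) *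
        (q ^ 2 * ((t₁ - 1) * (t₂ - 1) * (t₃ - 1))) =
      (q - t₁) * (q - t₂) * (q - t₃) := by
  have d₁ : t₁ - 1 ≠ 0 := sub_ne_zero.mpr h₁
  have d₂ : t₂ - 1 ≠ 0 := sub_ne_zero.mpr h₂
  have d₃ : t₃ - 1 ≠ 0 := sub_ne_zero.mpr h₃
  field_simp
  linear_combination (q - 1) ^ 2 * hprod

theorem residue_ne_zero {q t₁ t₂ t₃ : K}
    (h₁ : t₁ ≠ 1) (h₂ : t₂ ≠ 1) (h₃ : t₃ ≠ 1) (hprod : t₁ * t₂ * t₃ = q)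
    (hq₁ : t₁ ≠ q) (hq₂ : t₂ ≠ q) (hq₃ : t₃ ≠ q) :
    (q - 1) / q * (1 / (t₁ - 1) + 1 / (t₂ - 1) + 1 / (t₃ - 1)) + (q - 2) / q ≠ 0 := by
  have hrhs : (q - t₁) * (q - t₂) * (q - t₃) ≠ 0 := by
    simp only [ne_eq, mul_eq_zero, sub_eq_zero, not_or]
    exact ⟨⟨Ne.symm hq₁, Ne.symm hq₂⟩, Ne.symm hq₃⟩
  rw [← residue_mul_eq h₁ h₂ h₃ hprod] at hrhs
  exact left_ne_zero_of_mul hrhs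

end Residue

theorem Complex.norm_ofReal_cpow_lt_self {q : ℝ} (hq : 1 < q) {α : ℂ} (hα : α.re < 1) :
    ‖(q : ℂ) ^ α‖ < q := by
  rw [Complex.norm_cpow_eq_rpow_re_of_pos (by linarith)]
  simpa using Real.rpow_lt_rpow_of_exponent_lt hq hα

theorem Complex.ofReal_cpow_ne_self {q : ℝ} (hq : 1 < q) {α : ℂ} (hα : α.re < 1) :
    (q : ℂ) ^ α ≠ q := by
  intro h
  have := Complex.norm_ofReal_cpow_lt_self hq hα
  rw [h, Complex.norm_real, Real.norm_eq_abs, abs_of_pos (by linarith)] at this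
  exact lt_irrefl q this

theorem statement9 (q : ℝ) (hq : 1 < q) (α₁ α₂ α₃ : ℂ)
    (h1 : (q : ℂ) ^ α₁ ≠ 1) (h2 : (q : ℂ) ^ α₂ ≠ 1) (h3 : (q : ℂ) ^ α₃ ≠ 1)
    (hre1 : α₁.re < 1) (hre2 : α₂.re < 1) (hre3 : α₃.re < 1)
    (hsum : (q : ℂ) ^ (α₁ + α₂ + α₃) = (q : ℂ)) :
    ((q : ℂ) - 1) / (q : ℂ) *
        (1 / ((q : ℂ) ^ α₁ - 1) + 1 / ((q : ℂ) ^ α₂ - 1) + 1 / ((q : ℂ) ^ α₃ - 1)) +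
      ((q : ℂ) - 2) / (q : ℂ) ≠ 0 := by
  have hq0 : (q : ℂ) ≠ 0 := Complex.ofReal_ne_zero.mpr (by linarith)
  have hprod : (q : ℂ) ^ α₁ * (q : ℂ) ^ α₂ * (q : ℂ) ^ α₃ = q := by
    rw [← Complex.cpow_add _ _ hq0, ← Complex.cpow_add _ _ hq0, hsum]
  exact residue_ne_zero h1 h2 h3 hprod (Complex.ofReal_cpow_ne_self hq hre1)
    (Complex.ofReal_cpow_ne_self hq hre2) (Complex.ofReal_cpow_ne_self hq hre3)
end
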